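/- arXiv:1605.06855 — 5 statements merged into one kernel-verified Lean document; each statement's English description precedes it below -/
import Mathlib

section
/- Let λ, μ : ℝ → ℝ be continuous nonnegative functions and let k ≥ 2 be an integer. Then f_k(·; λ, μ) satisfies f_k(0; λ, μ) = 0 and is differentiable in t with f_k'(t; λ, μ) = -(μ(t) + λ(t)) · f_k(t; λ, μ) + μ(t) · f_{k-1}(t; λ, μ) + λ(t) for all t ≥ 0. -/
/-!
Integrating by parts, `Γ(n+1, x) = n! e^{-x} P_{n+1}(x)` with `P_m(x) = ∑_{j<m} x^j/j!`.
Writing `W(t) = ∫_0^t (λ + μ)`, this gives `f_{n+1}(t) = e^{-W(t)} H_{n+1}(t)` with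
`H_m(t) = ∫_0^t λ(τ) e^{W(τ)} P_m(∫_τ^t μ) dτ` (`partialSumIntegral`). Since
`P_m(x + y) = ∑_{i<m} x^i/i! P_{m-i}(y)`, the kernel of `H_m` is a finite sum of products of a
function of `t` and a function of `τ`, so it can be differentiated under the integral sign, and
`P_{m+1}' = P_m` gives `H_{m+1}' = λ e^W + μ H_m`. The product rule for `e^{-W} H_k` then yields
the equation for `f_k`.
-/

open MeasureTheory Real Set Filter Topology intervalIntegral

/-- The upper incomplete Gamma function `Γ(k, x) = ∫_x^∞ s^{k-1} e^{-s} ds`. -/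
noncomputable def uGamma (k : ℕ) (x : ℝ) : ℝ :=
  ∫ s in Set.Ioi x, s ^ (k - 1) * Real.exp (-s)

/-- `f_k(t; λ, μ) = (1/(k-1)!) ∫_0^t λ(τ) exp(-∫_τ^t λ) Γ(k, ∫_τ^t μ) dτ`. -/
noncomputable def fk (k : ℕ) (lam mu : ℝ → ℝ) (t : ℝ) : ℝ :=
  (1 / (Nat.factorial (k - 1) : ℝ)) *
    ∫ τ in (0:ℝ)..t,
      lam τ * Real.exp (-∫ x in τ..t, lam x) * uGamma k (∫ x in τ..t, mu x)

open Finset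

noncomputable def expPartialSum (n : ℕ) (x : ℝ) : ℝ := ∑ j ∈ range n, x ^ j / j.factorial

lemma expPartialSum_succ (n : ℕ) (x : ℝ) :
    expPartialSum (n + 1) x = expPartialSum n x + x ^ n / n.factorial :=
  sum_range_succ _ _

lemma expPartialSum_one (x : ℝ) : expPartialSum 1 x = 1 := by simp [expPartialSum]

lemma expPartialSum_succ_zero (n : ℕ) : expPartialSum (n + 1) 0 = 1 := by
  simp [expPartialSum, sum_range_succ']

lemma continuous_expPartialSum (n : ℕ) : Continuous (expPartialSum n) := by
  unfold expPartialSum; fun_prop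

lemma hasDerivAt_expPartialSum_succ (n : ℕ) (x : ℝ) :
    HasDerivAt (expPartialSum (n + 1)) (expPartialSum n x) x := by
  induction n with
  | zero =>
    rw [show expPartialSum 1 = fun _ => 1 from funext expPartialSum_one]
    simpa [expPartialSum] using hasDerivAt_const x (1 : ℝ)
  | succ n ih =>
    have hpow : HasDerivAt (fun x : ℝ => x ^ (n + 1) / (n + 1).factorial)
        (x ^ n / n.factorial) x := by
      refine ((hasDerivAt_pow (n + 1) x).div_const ((n + 1).factorial : ℝ)).congr_deriv ?_
      rw [Nat.factorial_succ]
      push_cast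
      field_simp
    rw [show expPartialSum (n + 2) = _ from funext (expPartialSum_succ (n + 1)),
      expPartialSum_succ]
    exact ih.add hpow

lemma expPartialSum_add (n : ℕ) (x y : ℝ) :
    expPartialSum n (x + y) = ∑ i ∈ range n, x ^ i / i.factorial * expPartialSum (n - i) y := by
  induction n with
  | zero => simp [expPartialSum]
  | succ n ih =>
    have hbinom : (x + y) ^ n / n.factorial
        = ∑ i ∈ range (n + 1), x ^ i / i.factorial * (y ^ (n - i) / (n - i).factorial) := by
      rw [add_pow, sum_div]
      refine sum_congr rfl fun i hi => ?_
      rw [Nat.cast_choose ℝ (Nat.lt_succ_iff.mp (mem_range.mp hi))]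
      field_simp
    have hsucc : ∀ i ∈ range n, expPartialSum (n + 1 - i) y
        = expPartialSum (n - i) y + y ^ (n - i) / (n - i).factorial := fun i hi => by
      rw [show n + 1 - i = n - i + 1 by have := mem_range.mp hi; omega, expPartialSum_succ]
    rw [expPartialSum_succ, ih, hbinom, sum_range_succ _ n, sum_range_succ _ n,
      sum_congr rfl fun i hi => congrArg _ (hsucc i hi), Nat.add_sub_cancel_left, Nat.sub_self,
      expPartialSum_one]
    simp only [mul_add, sum_add_distrib, pow_zero, Nat.factorial_zero, Nat.cast_one, div_one]
    ring

lemma hasDerivAt_neg_factorial_mul_exp_neg_mul_expPartialSum (n : ℕ) (s : ℝ) :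
    HasDerivAt (fun s => -(n.factorial * (exp (-s) * expPartialSum (n + 1) s)))
      (s ^ n * exp (-s)) s := by
  have hexp : HasDerivAt (fun s => exp (-s)) (-exp (-s)) s := by
    simpa using (hasDerivAt_neg s).exp
  refine (((hexp.mul (hasDerivAt_expPartialSum_succ n s)).const_mul _).neg).congr_deriv ?_
  rw [expPartialSum_succ]
  field_simp
  ring

lemma tendsto_neg_factorial_mul_exp_neg_mul_expPartialSum (n : ℕ) :
    Tendsto (fun s => -(n.factorial * (exp (-s) * expPartialSum (n + 1) s))) atTop (𝓝 0) := by
  have h : Tendsto (fun s => exp (-s) * expPartialSum (n + 1) s) atTop (𝓝 0) := by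
    simp_rw [expPartialSum, mul_sum]
    simpa using tendsto_finsetSum (range (n + 1)) fun j _ =>
      ((tendsto_pow_mul_exp_neg_atTop_nhds_zero j).div_const (j.factorial : ℝ)).congr
        fun s => by ring
  simpa using (h.const_mul (n.factorial : ℝ)).neg

lemma integrableOn_pow_mul_exp_neg_Ioi (n : ℕ) (x : ℝ) :
    IntegrableOn (fun s => s ^ n * exp (-s)) (Ioi x) := by
  have h0 : IntegrableOn (fun s => s ^ n * exp (-s)) (Ioi 0) :=
    integrableOn_Ioi_deriv_of_nonneg
      (hasDerivAt_neg_factorial_mul_exp_neg_mul_expPartialSum n 0).continuousAt.continuousWithinAt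
      (fun s _ => hasDerivAt_neg_factorial_mul_exp_neg_mul_expPartialSum n s)
      (fun s hs => mul_nonneg (pow_nonneg (le_of_lt hs) n) (exp_pos _).le)
      (tendsto_neg_factorial_mul_exp_neg_mul_expPartialSum n)
  rcases le_or_gt 0 x with hx | hx
  · exact h0.mono_set (Ioi_subset_Ioi hx)
  · rw [← Ioc_union_Ioi_eq_Ioi hx.le]
    exact (Continuous.integrableOn_Ioc (by fun_prop)).union h0

lemma uGamma_succ (n : ℕ) (x : ℝ) :
    uGamma (n + 1) x = n.factorial * (exp (-x) * expPartialSum (n + 1) x) := by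
  have h := integral_Ioi_of_hasDerivAt_of_tendsto
    (hasDerivAt_neg_factorial_mul_exp_neg_mul_expPartialSum n x).continuousAt.continuousWithinAt
    (fun s _ => hasDerivAt_neg_factorial_mul_exp_neg_mul_expPartialSum n s)
    (integrableOn_pow_mul_exp_neg_Ioi n x)
    (tendsto_neg_factorial_mul_exp_neg_mul_expPartialSum n)
  simpa [uGamma] using h

lemma hasDerivAt_integral_of_separable {ι : Type*} {G G' : ℝ → ℝ → ℝ} (s : Finset ι)
    (a b : ι → ℝ → ℝ) (c t : ℝ) (ha : ∀ i ∈ s, Differentiable ℝ (a i))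
    (hb : ∀ i ∈ s, Continuous (b i)) (hG : ∀ u τ, G u τ = ∑ i ∈ s, a i u * b i τ)
    (hG' : ∀ τ, HasDerivAt (G · τ) (G' t τ) t) :
    HasDerivAt (fun u => ∫ τ in c..u, G u τ) (G t t + ∫ τ in c..t, G' t τ) t := by
  have hB : ∀ i ∈ s, HasDerivAt (fun u => ∫ τ in c..u, b i τ) (b i t) t := fun i hi =>
    ((hb i hi).integral_hasStrictDerivAt c t).hasDerivAt
  have hsplit : ∀ u, ∫ τ in c..u, G u τ = ∑ i ∈ s, a i u * ∫ τ in c..u, b i τ := by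
    intro u
    simp_rw [hG, ← intervalIntegral.integral_const_mul]
    exact integral_finsetSum fun i hi => ((hb i hi).intervalIntegrable c u).const_mul _
  -- `G'` is only known through `hG'`; uniqueness of derivatives makes it separable too.
  have hG'_eq : ∀ τ, G' t τ = ∑ i ∈ s, deriv (a i) t * b i τ := fun τ =>
    (hG' τ).unique (by
      simp_rw [hG]
      exact HasDerivAt.fun_sum fun i hi => ((ha i hi t).hasDerivAt.mul_const (b i τ)))
  have hint : ∫ τ in c..t, G' t τ = ∑ i ∈ s, deriv (a i) t * ∫ τ in c..t, b i τ := by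
    simp_rw [hG'_eq, ← intervalIntegral.integral_const_mul]
    exact integral_finsetSum fun i hi => ((hb i hi).intervalIntegrable c t).const_mul _
  simp_rw [hsplit, hint, hG, ← sum_add_distrib]
  exact HasDerivAt.fun_sum fun i hi =>
    ((ha i hi t).hasDerivAt.mul (hB i hi)).congr_deriv (by ring)

noncomputable def partialSumIntegral (lam mu : ℝ → ℝ) (n : ℕ) (t : ℝ) : ℝ :=
  ∫ τ in 0..t,
    lam τ * exp (∫ x in 0..τ, lam x + mu x) * expPartialSum n (∫ x in τ..t, mu x)

section

variable {lam mu : ℝ → ℝ}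

lemma fk_succ_eq (hlamc : Continuous lam) (hmuc : Continuous mu) (n : ℕ) (t : ℝ) :
    fk (n + 1) lam mu t =
      exp (-∫ x in 0..t, lam x + mu x) * partialSumIntegral lam mu (n + 1) t := by
  have hexp : ∀ τ, exp (-∫ x in τ..t, lam x) * exp (-∫ x in τ..t, mu x)
      = exp (-∫ x in 0..t, lam x + mu x) * exp (∫ x in 0..τ, lam x + mu x) := fun τ => by
    have hsum : Continuous fun x => lam x + mu x := hlamc.add hmuc
    have h := integral_interval_sub_left (μ := volume) (hsum.intervalIntegrable 0 t)
      (hsum.intervalIntegrable 0 τ)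
    rw [integral_add (hlamc.intervalIntegrable τ t) (hmuc.intervalIntegrable τ t)] at h
    rw [← exp_add, ← exp_add]
    congr 1
    linarith
  unfold fk partialSumIntegral
  simp_rw [Nat.add_sub_cancel, uGamma_succ, ← intervalIntegral.integral_const_mul]
  congr 1 with τ
  field_simp
  linear_combination (lam τ * expPartialSum (n + 1) (∫ x in τ..t, mu x)) * hexp τ

lemma hasDerivAt_partialSumIntegral (hlamc : Continuous lam) (hmuc : Continuous mu) (n : ℕ)
    (t : ℝ) :
    HasDerivAt (partialSumIntegral lam mu (n + 1))
      (lam t * exp (∫ x in 0..t, lam x + mu x) + mu t * partialSumIntegral lam mu n t) t := by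
  have hweight : Continuous fun τ => lam τ * exp (∫ x in 0..τ, lam x + mu x) :=
    hlamc.mul (continuous_primitive (fun a b => (hlamc.add hmuc).intervalIntegrable a b) 0).rexp
  have hsplit : ∀ u τ, ∫ x in τ..u, mu x = (∫ x in 0..u, mu x) + -∫ x in 0..τ, mu x := by
    intro u τ
    rw [← sub_eq_add_neg, integral_interval_sub_left (hmuc.intervalIntegrable 0 u)
      (hmuc.intervalIntegrable 0 τ)]
  have h := hasDerivAt_integral_of_separable (range (n + 1))
    (fun i u => (∫ x in 0..u, mu x) ^ i / i.factorial)
    (fun i τ => lam τ * exp (∫ x in 0..τ, lam x + mu x) *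
      expPartialSum (n + 1 - i) (-∫ x in 0..τ, mu x)) 0 t
    (G := fun u τ => lam τ * exp (∫ x in 0..τ, lam x + mu x) *
      expPartialSum (n + 1) (∫ x in τ..u, mu x))
    (G' := fun t τ => lam τ * exp (∫ x in 0..τ, lam x + mu x) *
      (expPartialSum n (∫ x in τ..t, mu x) * mu t))
    (fun i _ => (Differentiable.pow (fun u =>
      (hmuc.integral_hasStrictDerivAt 0 u).hasDerivAt.differentiableAt) i).div_const _)
    (fun i _ => hweight.mul ((continuous_expPartialSum _).comp
      (continuous_primitive (fun a b => hmuc.intervalIntegrable a b) 0).neg))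
    (fun u τ => by rw [hsplit, expPartialSum_add, mul_sum]; ring_nf)
    (fun τ => ((hasDerivAt_expPartialSum_succ n _).comp t
      (hmuc.integral_hasStrictDerivAt τ t).hasDerivAt).const_mul _)
  refine h.congr_deriv ?_
  simp only [integral_same, expPartialSum_succ_zero, mul_one, partialSumIntegral]
  rw [← intervalIntegral.integral_const_mul]
  congr 2 with τ
  ring

end

theorem stmt1_general (lam mu : ℝ → ℝ) (hlamc : Continuous lam) (hmuc : Continuous mu)
    (k : ℕ) (hk : 2 ≤ k) :
    fk k lam mu 0 = 0 ∧
      ∀ t, 0 ≤ t → HasDerivAt (fk k lam mu)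
        (-(mu t + lam t) * fk k lam mu t + mu t * fk (k - 1) lam mu t + lam t) t := by
  obtain ⟨n, rfl⟩ : ∃ n, k = n + 2 := ⟨k - 2, by omega⟩
  refine ⟨by simp [fk], fun t _ => ?_⟩
  have hfk : ∀ m, fk (m + 1) lam mu = fun u =>
      exp (-∫ x in 0..u, lam x + mu x) * partialSumIntegral lam mu (m + 1) u :=
    fun m => funext (fk_succ_eq hlamc hmuc m)
  rw [show n + 2 - 1 = n + 1 from rfl, hfk, hfk]
  have hW : HasDerivAt (fun u => ∫ x in 0..u, lam x + mu x) (lam t + mu t) t :=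
    ((hlamc.add hmuc).integral_hasStrictDerivAt 0 t).hasDerivAt
  refine (hW.neg.exp.mul (hasDerivAt_partialSumIntegral hlamc hmuc (n + 1) t)).congr_deriv ?_
  have hinv : exp (-∫ x in 0..t, lam x + mu x) * exp (∫ x in 0..t, lam x + mu x) = 1 := by
    rw [← exp_add, neg_add_cancel, exp_zero]
  linear_combination lam t * hinv

/-- For continuous nonnegative `λ, μ` and an integer `k ≥ 2`, `f_k(0; λ, μ) = 0`
and `f_k` is differentiable in `t` with
`f_k'(t) = -(μ(t) + λ(t)) f_k(t) + μ(t) f_{k-1}(t) + λ(t)` for all `t ≥ 0`. -/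
theorem stmt1 (lam mu : ℝ → ℝ) (hlamc : Continuous lam) (hmuc : Continuous mu)
    (hlam : ∀ x, 0 ≤ lam x) (hmu : ∀ x, 0 ≤ mu x)
    (k : ℕ) (hk : 2 ≤ k) :
    fk k lam mu 0 = 0 ∧
      ∀ t, 0 ≤ t → HasDerivAt (fk k lam mu)
        (-(mu t + lam t) * fk k lam mu t + mu t * fk (k - 1) lam mu t + lam t) t :=
  stmt1_general lam mu hlamc hmuc k hk
end

section
/- Let λ, μ : ℝ → ℝ be continuous nonnegative functions and let k ≥ 1 be an integer. Then for every t ≥ 0, f_k(t; λ, μ) = 1 - exp(-∫_0^t λ(x) dx) · Γ(k, ∫_0^t μ(x) dx) / (k-1)! - (1/(k-1)!) · ∫_0^t exp(-∫_τ^t λ(x) dx) · μ(τ) · (∫_τ^t μ(x) dx)^{k-1} · exp(-∫_τ^t μ(x) dx) dτ. -/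
/-!
Integration by parts on `[0, t]` with `u(τ) = Γ(k, ∫_τ^t μ)` and `v(τ) = exp(-∫_τ^t λ)`:
`v' = λ v` and, since `∂ₓΓ(k, x) = -x^{k-1} e^{-x}`, `u' = μ(τ) (∫_τ^t μ)^{k-1} exp(-∫_τ^t μ)`.
The boundary term at `τ = t` is `Γ(k, 0) = (k-1)!`.
-/

open MeasureTheory Real Set Filter Topology intervalIntegral

theorem Continuous.hasDerivAt_integral_left {f : ℝ → ℝ} (hf : Continuous f) (a b : ℝ) :
    HasDerivAt (fun u => ∫ x in u..b, f x) (-f a) a :=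
  integral_hasDerivAt_left (hf.intervalIntegrable a b) (hf.stronglyMeasurableAtFilter _ _)
    hf.continuousAt

theorem integrableOn_pow_mul_exp_neg_Ioi_zero (n : ℕ) :
    IntegrableOn (fun s : ℝ => s ^ n * exp (-s)) (Ioi 0) :=
  (GammaIntegral_convergent (s := n + 1) (by positivity)).congr_fun
    (fun s _ => by simp [mul_comm]) measurableSet_Ioi

theorem uGamma_zero (k : ℕ) : uGamma k 0 = (k - 1).factorial := by
  rw [← Gamma_nat_eq_factorial, Gamma_eq_integral (by positivity), uGamma]
  refine setIntegral_congr_fun measurableSet_Ioi fun s _ => ?_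
  simp [mul_comm]

theorem uGamma_eq_uGamma_zero_add (k : ℕ) (x : ℝ) :
    uGamma k x = uGamma k 0 + ∫ s in x..0, s ^ (k - 1) * exp (-s) :=
  (integral_interval_add_Ioi' ((by fun_prop : Continuous _).intervalIntegrable _ _)
    (integrableOn_pow_mul_exp_neg_Ioi_zero _)).symm.trans (add_comm _ _)

theorem hasDerivAt_uGamma (k : ℕ) (x : ℝ) :
    HasDerivAt (uGamma k) (-(x ^ (k - 1) * exp (-x))) x := by
  rw [funext (uGamma_eq_uGamma_zero_add k)]
  exact ((by fun_prop : Continuous fun s : ℝ => s ^ (k - 1) * exp (-s)).hasDerivAt_integral_left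
    x 0).const_add _

theorem integral_mul_exp_mul_uGamma {lam mu : ℝ → ℝ} (hlam : Continuous lam)
    (hmu : Continuous mu) (k : ℕ) (a t : ℝ) :
    ∫ τ in a..t, lam τ * exp (-∫ x in τ..t, lam x) * uGamma k (∫ x in τ..t, mu x) =
      (k - 1).factorial - exp (-∫ x in a..t, lam x) * uGamma k (∫ x in a..t, mu x) -
        ∫ τ in a..t, exp (-∫ x in τ..t, lam x) *
          (mu τ * (∫ x in τ..t, mu x) ^ (k - 1) * exp (-∫ x in τ..t, mu x)) := by
  set L := fun τ => ∫ x in τ..t, lam x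
  set M := fun τ => ∫ x in τ..t, mu x
  have hL : ∀ τ, HasDerivAt L (-lam τ) τ := fun τ => hlam.hasDerivAt_integral_left τ t
  have hM : ∀ τ, HasDerivAt M (-mu τ) τ := fun τ => hmu.hasDerivAt_integral_left τ t
  have hLc : Continuous L := continuous_iff_continuousAt.2 fun τ => (hL τ).continuousAt
  have hMc : Continuous M := continuous_iff_continuousAt.2 fun τ => (hM τ).continuousAt
  have hu : ∀ τ, HasDerivAt (fun τ => uGamma k (M τ))
      (mu τ * M τ ^ (k - 1) * exp (-M τ)) τ := fun τ =>
    ((hasDerivAt_uGamma k (M τ)).comp τ (hM τ)).congr_deriv (by ring)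
  have hv : ∀ τ, HasDerivAt (fun τ => exp (-L τ)) (lam τ * exp (-L τ)) τ := fun τ =>
    ((hL τ).neg.exp).congr_deriv (by rw [neg_neg, mul_comm]; rfl)
  have parts := integral_mul_deriv_eq_deriv_mul (fun τ _ => hu τ) (fun τ _ => hv τ)
    (Continuous.intervalIntegrable (by fun_prop) a t)
    (Continuous.intervalIntegrable (by fun_prop) a t)
  have hLt : L t = 0 := integral_same
  have hMt : M t = 0 := integral_same
  simp only [hLt, hMt, neg_zero, exp_zero, mul_one, uGamma_zero] at parts
  calc _ = ∫ τ in a..t, uGamma k (M τ) * (lam τ * exp (-L τ)) :=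
        integral_congr fun τ _ => by ring
    _ = _ := by
        rw [parts, mul_comm (uGamma k (M a))]
        congr 1
        exact integral_congr fun τ _ => by ring

theorem stmt7_general (lam mu : ℝ → ℝ) (hlamc : Continuous lam) (hmuc : Continuous mu)
    (k : ℕ) (t : ℝ) :
    fk k lam mu t =
      1 - Real.exp (-∫ x in (0:ℝ)..t, lam x) * uGamma k (∫ x in (0:ℝ)..t, mu x) /
            (Nat.factorial (k - 1) : ℝ) -
        (1 / (Nat.factorial (k - 1) : ℝ)) *
          ∫ τ in (0:ℝ)..t,
            Real.exp (-∫ x in τ..t, lam x) * (mu τ * (∫ x in τ..t, mu x) ^ (k - 1) *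
              Real.exp (-∫ x in τ..t, mu x)) := by
  have hfac : ((k - 1).factorial : ℝ) ≠ 0 := by positivity
  rw [fk, integral_mul_exp_mul_uGamma hlamc hmuc]
  field_simp

/-- the integration-by-parts representation of `f_k(t; λ, μ)`. -/
theorem stmt7 (lam mu : ℝ → ℝ) (hlamc : Continuous lam) (hmuc : Continuous mu)
    (hlam : ∀ x, 0 ≤ lam x) (hmu : ∀ x, 0 ≤ mu x)
    (k : ℕ) (hk : 1 ≤ k) (t : ℝ) (ht : 0 ≤ t) :
    fk k lam mu t =
      1 - Real.exp (-∫ x in (0:ℝ)..t, lam x) * uGamma k (∫ x in (0:ℝ)..t, mu x) /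
            (Nat.factorial (k - 1) : ℝ) -
        (1 / (Nat.factorial (k - 1) : ℝ)) *
          ∫ τ in (0:ℝ)..t,
            Real.exp (-∫ x in τ..t, lam x) * (mu τ * (∫ x in τ..t, mu x) ^ (k - 1) *
              Real.exp (-∫ x in τ..t, mu x)) :=
  stmt7_general lam mu hlamc hmuc k t
end

section
/- Let μ : ℝ → ℝ be a nonnegative locally integrable function, let k ≥ 1 be an integer, fix t ≥ 0 and T > 0, and let s : ℝ → ℝ be a nonnegative integrable function. Then both λ ↦ f_k(t; λ, μ) and λ ↦ ∫_0^T f_k(r; λ, μ)·s(r) dr are concave on the set of nonnegative piecewise constant functions on [0, T]: for all nonnegative piecewise constant λ_1, λ_2 and all α ∈ (0,1), f_k(t; α·λ_1 + (1-α)·λ_2, μ) ≥ α·f_k(t; λ_1, μ) + (1-α)·f_k(t; λ_2, μ), and likewise for the integral functional. -/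
open MeasureTheory Real Set Filter Topology intervalIntegral

/-- A piecewise constant function on `[0, T]`:
`f(t) = Σ_{m=1}^M a_m · 1[τ_{m-1} ≤ t < τ_m]` with `0 = τ_0 < τ_1 < … < τ_M = T`. -/
def IsPiecewiseConstOn (T : ℝ) (f : ℝ → ℝ) : Prop :=
  ∃ (M : ℕ) (a : ℕ → ℝ) (τ : ℕ → ℝ), 1 ≤ M ∧ τ 0 = 0 ∧ τ M = T ∧
    (∀ m < M, τ m < τ (m + 1)) ∧
    ∀ t, f t = ∑ m ∈ Finset.range M,
      a (m + 1) * Set.indicator (Set.Ico (τ m) (τ (m + 1))) (fun _ => (1:ℝ)) t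

/-!
Since `Γ(k, h) = ∫_{s > 0} s^{k-1} e^{-s} 1[h < s] ds` for `h ≥ 0`, Fubini gives
`(k-1)! f_k(t; λ, μ) = ∫_{s > 0} s^{k-1} e^{-s} (1 - exp (-∫_{E_s} λ)) ds` with
`E_s = {τ ∈ (0, t] | ∫_τ^t μ < s}`. As `μ ≥ 0`, `E_s` is an interval ending at `t` up to a null
set, and the inner integral `∫_{E_s} λ(τ) exp (-∫_τ^t λ) dτ` is evaluated by the fundamental
theorem of calculus: `τ ↦ exp (-∫_τ^t λ)` has right derivative `λ(τ) exp (-∫_τ^t λ)` everywhere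
as soon as `λ` is right-continuous, which piecewise constant functions are. Now `λ ↦ ∫_{E_s} λ` is
linear and `x ↦ 1 - exp (-x)` is concave, and integrating concave functions against nonnegative
weights keeps them concave; this gives both claims.
-/

noncomputable def gammaIntegrand (k : ℕ) (s : ℝ) : ℝ := s ^ (k - 1) * exp (-s)

lemma continuous_gammaIntegrand (k : ℕ) : Continuous (gammaIntegrand k) := by
  unfold gammaIntegrand; fun_prop

lemma gammaIntegrand_nonneg (k : ℕ) {s : ℝ} (hs : 0 ≤ s) : 0 ≤ gammaIntegrand k s :=
  mul_nonneg (pow_nonneg hs _) (exp_pos _).le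

lemma integrableOn_gammaIntegrand_Ioi (k : ℕ) (a : ℝ) :
    IntegrableOn (gammaIntegrand k) (Ioi a) := by
  have h0 : IntegrableOn (gammaIntegrand k) (Ioi 0) := by
    refine (GammaIntegral_convergent (s := ((k - 1 : ℕ) : ℝ) + 1) (by positivity)).congr_fun
      (fun x _ => ?_) measurableSet_Ioi
    simp only [gammaIntegrand, add_sub_cancel_right, rpow_natCast, mul_comm]
  refine IntegrableOn.mono_set ?_ (Ioi_subset_Ioc_union_Ioi (b := 0))
  exact ((continuous_gammaIntegrand k).integrableOn_Icc.mono_set Ioc_subset_Icc_self).union h0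

lemma uGamma_eq_integral_gammaIntegrand (k : ℕ) (x : ℝ) :
    uGamma k x = ∫ s in Ioi x, gammaIntegrand k s := rfl

lemma continuous_uGamma (k : ℕ) : Continuous (uGamma k) := by
  have hsub : uGamma k = fun x => uGamma k 0 - ∫ s in (0:ℝ)..x, gammaIntegrand k s := by
    funext x
    rw [← integral_Ioi_sub_Ioi' (integrableOn_gammaIntegrand_Ioi k 0)
      (integrableOn_gammaIntegrand_Ioi k x)]
    simp only [uGamma_eq_integral_gammaIntegrand, sub_sub_cancel]
  rw [hsub]
  exact continuous_const.sub
    (continuous_primitive (fun a b => (continuous_gammaIntegrand k).intervalIntegrable a b) 0)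

lemma uGamma_eq_integral_indicator (k : ℕ) {x : ℝ} (hx : 0 ≤ x) :
    uGamma k x = ∫ s in Ioi 0, (Ioi x).indicator (gammaIntegrand k) s := by
  rw [setIntegral_indicator measurableSet_Ioi, Ioi_inter_Ioi, max_eq_right hx]
  rfl

lemma MeasureTheory.LocallyIntegrable.intervalIntegrable {f : ℝ → ℝ} (hf : LocallyIntegrable f)
    (a b : ℝ) : IntervalIntegrable f volume a b :=
  (hf.integrableOn_isCompact isCompact_uIcc).intervalIntegrable

lemma MeasureTheory.LocallyIntegrable.continuous_integral_bounds {f : ℝ → ℝ}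
    (hf : LocallyIntegrable f) : Continuous fun p : ℝ × ℝ => ∫ x in p.1..p.2, f x := by
  have hF := continuous_primitive hf.intervalIntegrable 0
  convert (hF.comp continuous_snd).sub (hF.comp continuous_fst) using 2 with p
  exact (integral_interval_sub_left (hf.intervalIntegrable 0 _) (hf.intervalIntegrable 0 _)).symm

def admissibleRates : Set (ℝ → ℝ) :=
  {lam | (∀ x, 0 ≤ lam x) ∧ LocallyIntegrable lam ∧ ∀ x, ContinuousWithinAt lam (Ici x) x}

lemma convex_admissibleRates : Convex ℝ admissibleRates := by
  rintro f ⟨hf0, hfi, hfc⟩ g ⟨hg0, hgi, hgc⟩ a b ha hb -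
  exact ⟨fun x => add_nonneg (mul_nonneg ha (hf0 x)) (mul_nonneg hb (hg0 x)),
    (hfi.smul a).add (hgi.smul b), fun x => ((hfc x).const_smul a).add ((hgc x).const_smul b)⟩

lemma continuousWithinAt_Ici_indicator_Ico (a b c x : ℝ) :
    ContinuousWithinAt ((Ico a b).indicator fun _ => c) (Ici x) x := by
  refine continuousWithinAt_const.congr_of_eventuallyEq ?_ rfl
  by_cases hx : x ∈ Ico a b
  · filter_upwards [Ico_mem_nhdsGE_of_mem hx] with y hy
    simp [hx, hy]
  · rcases not_and_or.1 hx with hxa | hxb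
    · filter_upwards [nhdsWithin_le_nhds (Iio_mem_nhds (not_le.1 hxa))] with y hy
      simp [indicator_of_notMem hx, indicator_of_notMem (fun h : y ∈ Ico a b => not_le.2 hy h.1)]
    · filter_upwards [self_mem_nhdsWithin] with y (hy : x ≤ y)
      simp [indicator_of_notMem hx, indicator_of_notMem
        (fun h : y ∈ Ico a b => hxb (hy.trans_lt h.2))]

lemma IsPiecewiseConstOn.continuousWithinAt_Ici {T : ℝ} {f : ℝ → ℝ} (hf : IsPiecewiseConstOn T f)
    (x : ℝ) : ContinuousWithinAt f (Ici x) x := by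
  obtain ⟨M, a, τ, -, -, -, -, hf⟩ := hf
  rw [funext hf]
  exact tendsto_finsetSum _ fun m _ =>
    continuousWithinAt_const.mul (continuousWithinAt_Ici_indicator_Ico _ _ _ x)

lemma IsPiecewiseConstOn.integrable {T : ℝ} {f : ℝ → ℝ} (hf : IsPiecewiseConstOn T f) :
    Integrable f := by
  obtain ⟨M, a, τ, -, -, -, -, hf⟩ := hf
  rw [funext hf]
  exact integrable_finsetSum _ fun m _ =>
    ((integrableOn_const measure_Ico_lt_top.ne).integrable_indicator measurableSet_Ico).const_mul _

lemma IsPiecewiseConstOn.mem_admissibleRates {T : ℝ} {f : ℝ → ℝ} (hf : IsPiecewiseConstOn T f)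
    (hf0 : ∀ x, 0 ≤ f x) : f ∈ admissibleRates :=
  ⟨hf0, hf.integrable.locallyIntegrable, hf.continuousWithinAt_Ici⟩

lemma integral_mul_exp_neg_integral {lam : ℝ → ℝ} (hint : LocallyIntegrable lam)
    (hrc : ∀ x, ContinuousWithinAt lam (Ici x) x) {a b : ℝ} (hab : a ≤ b) :
    ∫ τ in a..b, lam τ * exp (-∫ x in τ..b, lam x) = 1 - exp (-∫ x in a..b, lam x) := by
  set u : ℝ → ℝ := fun τ => exp (-∫ x in τ..b, lam x)
  have hu : Continuous u :=
    (hint.continuous_integral_bounds.comp (continuous_id.prodMk continuous_const)).neg.rexp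
  have hderiv : ∀ τ, HasDerivWithinAt u (lam τ * u τ) (Ici τ) τ := fun τ => by
    simpa [mul_comm] using (integral_hasDerivWithinAt_left (hint.intervalIntegrable τ b)
      (s := Ici τ) (t := Ioi τ) hint.aestronglyMeasurable.stronglyMeasurableAtFilter
      ((hrc τ).mono Ioi_subset_Ici_self)).neg.exp
  rw [integral_eq_sub_of_hasDeriv_right_of_le hab hu.continuousOn
    (fun τ _ => (hderiv τ).mono Ioi_subset_Ici_self)
    ((hint.intervalIntegrable a b).mul_continuousOn hu.continuousOn)]
  simp [u]

lemma IsUpperSet.inter_Ioc_ae_eq {μ : Measure ℝ} [NullSingletonClass μ] {U : Set ℝ}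
    (hU : IsUpperSet U) {b c : ℝ} (hbc : b ≤ c) :
    ∃ a ∈ Icc b c, (U ∩ Ioc b c : Set ℝ) =ᵐ[μ] (Ioc a c : Set ℝ) := by
  set S : Set ℝ := insert c (U ∩ Ioc b c)
  have hbS : ∀ x ∈ S, b ≤ x := by
    rintro x (rfl | ⟨-, hx⟩)
    exacts [hbc, hx.1.le]
  have hS : BddBelow S := ⟨b, hbS⟩
  have hsub : Ioc (sInf S) c ⊆ U ∩ Ioc b c := by
    rintro τ ⟨hτ, hτc⟩
    obtain ⟨x, hxS, hxτ⟩ := exists_lt_of_csInf_lt (insert_nonempty _ _) hτ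
    rcases hxS with rfl | ⟨hxU, hx⟩
    · exact absurd hτc (not_le.2 hxτ)
    · exact ⟨hU hxτ.le hxU, hx.1.trans hxτ, hτc⟩
  have hsup : U ∩ Ioc b c ⊆ Icc (sInf S) c := fun τ hτ =>
    ⟨csInf_le hS (mem_insert_of_mem _ hτ), hτ.2.2⟩
  exact ⟨sInf S, ⟨le_csInf (insert_nonempty _ _) hbS, csInf_le hS (mem_insert _ _)⟩,
    (hsup.eventuallyLE.trans Ioc_ae_eq_Icc.symm.le).antisymm hsub.eventuallyLE⟩

lemma setIntegral_mul_exp_neg_integral_of_isUpperSet {lam : ℝ → ℝ} (hint : LocallyIntegrable lam)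
    (hrc : ∀ x, ContinuousWithinAt lam (Ici x) x) {U : Set ℝ} (hU : IsUpperSet U) {b t : ℝ}
    (hbt : b ≤ t) :
    ∫ τ in U ∩ Ioc b t, lam τ * exp (-∫ x in τ..t, lam x) =
      1 - exp (-∫ τ in U ∩ Ioc b t, lam τ) := by
  obtain ⟨a, ha, hae⟩ := hU.inter_Ioc_ae_eq (μ := volume) hbt
  rw [setIntegral_congr_set hae, setIntegral_congr_set hae, ← integral_of_le ha.2,
    ← integral_of_le ha.2]
  exact integral_mul_exp_neg_integral hint hrc ha.2

lemma integral_mul_uGamma_eq {α : Type*} [MeasurableSpace α] {μ : Measure α} [SFinite μ]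
    {g h : α → ℝ} (hg : Integrable g μ) (hh : Measurable h) (hh0 : ∀ᵐ x ∂μ, 0 ≤ h x) (k : ℕ) :
    ∫ x, g x * uGamma k (h x) ∂μ =
      ∫ s in Ioi 0, gammaIntegrand k s * ∫ x in {x | h x < s}, g x ∂μ := by
  set F : α × ℝ → ℝ :=
    {p | h p.1 < p.2}.indicator fun p => g p.1 * gammaIntegrand k p.2
  have hF : Integrable F (μ.prod (volume.restrict (Ioi 0))) := by
    refine (hg.mul_prod (integrableOn_gammaIntegrand_Ioi k 0)).mono ?_
      (ae_of_all _ fun p => norm_indicator_le_norm_self _ _)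
    exact (hg.aestronglyMeasurable.comp_fst.mul
      ((continuous_gammaIntegrand k).measurable.comp measurable_snd).aestronglyMeasurable).indicator
      (measurableSet_lt (hh.comp measurable_fst) measurable_snd)
  have hF_left : ∀ x, 0 ≤ h x → ∫ s in Ioi 0, F (x, s) = g x * uGamma k (h x) := fun x hx => by
    rw [uGamma_eq_integral_indicator k hx, ← MeasureTheory.integral_const_mul]
    refine integral_congr_ae (ae_of_all _ fun s => ?_)
    by_cases hs : h x < s <;> simp [F, hs]
  have hF_right (s : ℝ) :
      ∫ x, F (x, s) ∂μ = gammaIntegrand k s * ∫ x in {x | h x < s}, g x ∂μ := by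
    rw [← MeasureTheory.integral_indicator (measurableSet_lt hh measurable_const),
      ← MeasureTheory.integral_const_mul]
    refine integral_congr_ae (ae_of_all _ fun x => ?_)
    by_cases hs : h x < s <;> simp [F, hs, mul_comm]
  calc ∫ x, g x * uGamma k (h x) ∂μ = ∫ x, (∫ s in Ioi 0, F (x, s)) ∂μ :=
        integral_congr_ae (hh0.mono fun x hx => (hF_left x hx).symm)
    _ = ∫ s in Ioi 0, ∫ x, F (x, s) ∂μ := integral_integral_swap (f := fun x s => F (x, s)) hF
    _ = _ := by simp only [hF_right]

def sublevelSet (mu : ℝ → ℝ) (t s : ℝ) : Set ℝ := {τ | ∫ x in τ..t, mu x < s} ∩ Ioc 0 t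

section Representation

variable {lam mu : ℝ → ℝ}

lemma antitone_integral_left (hmu0 : ∀ x, 0 ≤ mu x) (hmu : LocallyIntegrable mu) (t : ℝ) :
    Antitone fun τ => ∫ x in τ..t, mu x := fun a b hab => by
  show ∫ x in b..t, mu x ≤ ∫ x in a..t, mu x
  rw [← integral_add_adjacent_intervals (hmu.intervalIntegrable a b) (hmu.intervalIntegrable b t)]
  exact le_add_of_nonneg_left (integral_nonneg hab fun x _ => hmu0 x)

lemma sublevelSet_mono (mu : ℝ → ℝ) (t : ℝ) : Monotone (sublevelSet mu t) :=
  fun _ _ hs _ hτ => ⟨hτ.1.trans_le hs, hτ.2⟩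

lemma fk_eq_integral_sublevelSet (hlam : lam ∈ admissibleRates) (hmu0 : ∀ x, 0 ≤ mu x)
    (hmu : LocallyIntegrable mu) (k : ℕ) {t : ℝ} (ht : 0 ≤ t) :
    fk k lam mu t = 1 / ((k - 1).factorial : ℝ) *
      ∫ s in Ioi 0, gammaIntegrand k s * (1 - exp (-∫ τ in sublevelSet mu t s, lam τ)) := by
  obtain ⟨-, hlamI, hlamc⟩ := hlam
  have hh : Continuous fun τ => ∫ x in τ..t, mu x :=
    hmu.continuous_integral_bounds.comp (continuous_id.prodMk continuous_const)
  have hg : IntegrableOn (fun τ => lam τ * exp (-∫ x in τ..t, lam x)) (Ioc 0 t) :=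
    ((hlamI.integrableOn_isCompact isCompact_Icc).mul_continuousOn
      (hlamI.continuous_integral_bounds.comp
        (continuous_id.prodMk continuous_const)).neg.rexp.continuousOn isCompact_Icc).mono_set
      Ioc_subset_Icc_self
  have hh0 : ∀ᵐ τ ∂volume.restrict (Ioc 0 t), 0 ≤ ∫ x in τ..t, mu x :=
    (ae_restrict_mem measurableSet_Ioc).mono fun τ hτ => integral_nonneg hτ.2 fun x _ => hmu0 x
  rw [fk, integral_of_le ht, integral_mul_uGamma_eq hg hh.measurable hh0 k]
  congr 1
  refine integral_congr_ae (ae_of_all _ fun s => ?_)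
  dsimp only
  rw [Measure.restrict_restrict (measurableSet_lt hh.measurable measurable_const),
    setIntegral_mul_exp_neg_integral_of_isUpperSet hlamI hlamc
      (U := {τ | ∫ x in τ..t, mu x < s})
      (fun a b hab ha => (antitone_integral_left hmu0 hmu t hab).trans_lt ha) ht, sublevelSet]

end Representation

lemma integrableOn_of_mem_admissibleRates {lam : ℝ → ℝ} (hlam : lam ∈ admissibleRates) {E : Set ℝ}
    (hE : Bornology.IsBounded E) : IntegrableOn lam E :=
  (hlam.2.1.integrableOn_isCompact hE.isCompact_closure).mono_set subset_closure

lemma isBounded_sublevelSet (mu : ℝ → ℝ) (t s : ℝ) : Bornology.IsBounded (sublevelSet mu t s) :=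
  Metric.isBounded_Ioc 0 t |>.subset inter_subset_right

lemma one_sub_exp_neg_mem_Icc {x : ℝ} (hx : 0 ≤ x) : 1 - exp (-x) ∈ Icc (0 : ℝ) 1 :=
  ⟨sub_nonneg.2 (exp_le_one_iff.2 (neg_nonpos.2 hx)), sub_le_self _ (exp_pos _).le⟩

lemma concaveOn_one_sub_exp_neg_setIntegral {E : Set ℝ} (hE : Bornology.IsBounded E) :
    ConcaveOn ℝ admissibleRates fun lam => 1 - exp (-∫ τ in E, lam τ) := by
  refine ⟨convex_admissibleRates, fun f hf g hg a b ha hb hab => ?_⟩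
  have hfE := integrableOn_of_mem_admissibleRates hf hE
  have hgE := integrableOn_of_mem_admissibleRates hg hE
  have hlin : ∫ τ in E, (a • f + b • g) τ = a * (∫ τ in E, f τ) + b * ∫ τ in E, g τ := by
    simp only [Pi.add_apply, Pi.smul_apply, smul_eq_mul]
    rw [integral_add (hfE.const_mul a) (hgE.const_mul b), MeasureTheory.integral_const_mul,
      MeasureTheory.integral_const_mul]
  have hexp := convexOn_exp.2 (mem_univ (-∫ τ in E, f τ)) (mem_univ (-∫ τ in E, g τ)) ha hb hab
  simp only [smul_eq_mul] at hexp ⊢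
  rw [hlin, show -(a * (∫ τ in E, f τ) + b * ∫ τ in E, g τ) =
    a * (-∫ τ in E, f τ) + b * -∫ τ in E, g τ by ring]
  linear_combination hexp + hab

lemma integrableOn_gammaIntegrand_mul_one_sub_exp {lam : ℝ → ℝ} (hlam : lam ∈ admissibleRates)
    (mu : ℝ → ℝ) (k : ℕ) (t : ℝ) :
    IntegrableOn (fun s => gammaIntegrand k s * (1 - exp (-∫ τ in sublevelSet mu t s, lam τ)))
      (Ioi 0) := by
  have hmono : Monotone fun s => ∫ τ in sublevelSet mu t s, lam τ := fun s s' hss' =>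
    setIntegral_mono_set (integrableOn_of_mem_admissibleRates hlam (isBounded_sublevelSet mu t s'))
      (ae_of_all _ fun τ => hlam.1 τ) (sublevelSet_mono mu t hss').eventuallyLE
  refine Integrable.mono (integrableOn_gammaIntegrand_Ioi k 0)
    ((continuous_gammaIntegrand k).measurable.mul
      (measurable_const.sub hmono.measurable.neg.exp)).aestronglyMeasurable
    (ae_of_all _ fun s => ?_)
  have h01 := one_sub_exp_neg_mem_Icc (integral_nonneg fun τ => hlam.1 τ :
    0 ≤ ∫ τ in sublevelSet mu t s, lam τ)
  rw [norm_mul, Real.norm_of_nonneg h01.1]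
  exact mul_le_of_le_one_right (norm_nonneg _) h01.2

lemma concaveOn_integral {E β : Type*} [AddCommGroup E] [Module ℝ E] [MeasurableSpace β]
    {ν : Measure β} {S : Set E} {F : E → β → ℝ} (hS : Convex ℝ S)
    (hF : ∀ᵐ b ∂ν, ConcaveOn ℝ S fun x => F x b) (hint : ∀ x ∈ S, Integrable (F x) ν) :
    ConcaveOn ℝ S fun x => ∫ b, F x b ∂ν := by
  refine ⟨hS, fun x hx y hy a c ha hc hac => ?_⟩
  simp only [smul_eq_mul]
  rw [← MeasureTheory.integral_const_mul, ← MeasureTheory.integral_const_mul,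
    ← integral_add ((hint x hx).const_mul a) ((hint y hy).const_mul c)]
  exact integral_mono_ae (((hint x hx).const_mul a).add ((hint y hy).const_mul c))
    (hint _ (hS hx hy ha hc hac)) (hF.mono fun b hb => hb.2 hx hy ha hc hac)

section Fk

variable {lam mu : ℝ → ℝ}

theorem concaveOn_fk (hmu0 : ∀ x, 0 ≤ mu x) (hmu : LocallyIntegrable mu) (k : ℕ) {t : ℝ}
    (ht : 0 ≤ t) : ConcaveOn ℝ admissibleRates fun lam => fk k lam mu t := by
  refine ConcaveOn.congr ?_ fun lam hlam => (fk_eq_integral_sublevelSet hlam hmu0 hmu k ht).symm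
  refine (concaveOn_integral convex_admissibleRates ?_ fun lam hlam =>
    integrableOn_gammaIntegrand_mul_one_sub_exp hlam mu k t).smul (by positivity)
  filter_upwards [ae_restrict_mem measurableSet_Ioi] with s hs
  exact (concaveOn_one_sub_exp_neg_setIntegral (isBounded_sublevelSet mu t s)).smul
    (gammaIntegrand_nonneg k (le_of_lt hs))

lemma abs_fk_le (hlam : lam ∈ admissibleRates) (hmu0 : ∀ x, 0 ≤ mu x) (hmu : LocallyIntegrable mu)
    (k : ℕ) {t : ℝ} (ht : 0 ≤ t) : |fk k lam mu t| ≤ 1 / ((k - 1).factorial : ℝ) * uGamma k 0 := by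
  have hmem : ∀ s ∈ Ioi (0 : ℝ), gammaIntegrand k s *
      (1 - exp (-∫ τ in sublevelSet mu t s, lam τ)) ∈ Icc 0 (gammaIntegrand k s) := fun s hs => by
    have h01 := one_sub_exp_neg_mem_Icc (integral_nonneg fun τ => hlam.1 τ :
      0 ≤ ∫ τ in sublevelSet mu t s, lam τ)
    have hφ := gammaIntegrand_nonneg k (le_of_lt hs)
    exact ⟨mul_nonneg hφ h01.1, mul_le_of_le_one_right hφ h01.2⟩
  rw [fk_eq_integral_sublevelSet hlam hmu0 hmu k ht, abs_mul, abs_of_pos (by positivity),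
    abs_of_nonneg (setIntegral_nonneg measurableSet_Ioi fun s hs => (hmem s hs).1)]
  gcongr
  exact setIntegral_mono_on (integrableOn_gammaIntegrand_mul_one_sub_exp hlam mu k t)
    (integrableOn_gammaIntegrand_Ioi k 0) measurableSet_Ioi fun s hs => (hmem s hs).2

lemma aestronglyMeasurable_integral_prod {F : ℝ × ℝ → ℝ} (hF : AEStronglyMeasurable F) (a : ℝ) :
    AEStronglyMeasurable fun r => ∫ τ in a..r, F (r, τ) := by
  have hslice : ∀ (S : Set (ℝ × ℝ)), MeasurableSet S →
      AEStronglyMeasurable fun r => ∫ τ, S.indicator F (r, τ) := fun S hS =>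
    (hF.indicator hS).integral_prod_right'
  refine ((hslice {p | a < p.2 ∧ p.2 ≤ p.1} ?_).sub (hslice {p | p.1 < p.2 ∧ p.2 ≤ a} ?_)).congr
    (ae_of_all _ fun r => ?_)
  · exact (measurableSet_lt measurable_const measurable_snd).inter
      (measurableSet_le measurable_snd measurable_fst)
  · exact (measurableSet_lt measurable_fst measurable_snd).inter
      (measurableSet_le measurable_snd measurable_const)
  · simp only [Pi.sub_apply, intervalIntegral, ← MeasureTheory.integral_indicator measurableSet_Ioc]
    rfl

lemma aestronglyMeasurable_fk (hlam : LocallyIntegrable lam) (hmu : LocallyIntegrable mu)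
    (k : ℕ) : AEStronglyMeasurable fun r => fk k lam mu r := by
  have hcont : ∀ {f : ℝ → ℝ}, LocallyIntegrable f →
      Continuous fun p : ℝ × ℝ => ∫ x in p.2..p.1, f x := fun hf =>
    hf.continuous_integral_bounds.comp continuous_swap
  unfold fk
  refine (aestronglyMeasurable_integral_prod (F := fun p =>
    lam p.2 * exp (-∫ x in p.2..p.1, lam x) * uGamma k (∫ x in p.2..p.1, mu x)) ?_ 0).const_mul _
  exact (hlam.aestronglyMeasurable.comp_snd.mul (hcont hlam).neg.rexp.aestronglyMeasurable).mul
    ((continuous_uGamma k).comp (hcont hmu)).aestronglyMeasurable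

lemma integrableOn_fk_mul (hlam : lam ∈ admissibleRates) (hmu0 : ∀ x, 0 ≤ mu x)
    (hmu : LocallyIntegrable mu) (k : ℕ) {s : ℝ → ℝ} (hs : Integrable s) (T : ℝ) :
    IntegrableOn (fun r => fk k lam mu r * s r) (Ioc 0 T) := by
  refine Integrable.mono'
    (hs.norm.const_mul (1 / ((k - 1).factorial : ℝ) * uGamma k 0)).integrableOn
    ((aestronglyMeasurable_fk hlam.2.1 hmu k).mul hs.aestronglyMeasurable).restrict ?_
  filter_upwards [ae_restrict_mem measurableSet_Ioc] with r hr
  rw [norm_mul, Real.norm_eq_abs]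
  exact mul_le_mul_of_nonneg_right (abs_fk_le hlam hmu0 hmu k hr.1.le) (norm_nonneg _)

theorem concaveOn_integral_fk_mul (hmu0 : ∀ x, 0 ≤ mu x) (hmu : LocallyIntegrable mu) (k : ℕ)
    {s : ℝ → ℝ} (hs0 : ∀ x, 0 ≤ s x) (hs : Integrable s) {T : ℝ} (hT : 0 ≤ T) :
    ConcaveOn ℝ admissibleRates fun lam => ∫ r in 0..T, fk k lam mu r * s r := by
  refine ConcaveOn.congr ?_ fun lam _ => (integral_of_le hT).symm
  refine concaveOn_integral convex_admissibleRates ?_ fun lam hlam =>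
    integrableOn_fk_mul hlam hmu0 hmu k hs T
  filter_upwards [ae_restrict_mem measurableSet_Ioc] with r hr
  exact ((concaveOn_fk hmu0 hmu k hr.1.le).smul (hs0 r)).congr fun lam _ => mul_comm _ _

end Fk

theorem stmt11_general (mu : ℝ → ℝ) (hmu0 : ∀ x, 0 ≤ mu x) (hmuInt : LocallyIntegrable mu)
    (k : ℕ) (t : ℝ) (ht : 0 ≤ t) (T : ℝ) (hT : 0 < T)
    (s : ℝ → ℝ) (hs0 : ∀ x, 0 ≤ s x) (hsInt : Integrable s)
    (lam1 lam2 : ℝ → ℝ) (h1 : ∀ x, 0 ≤ lam1 x) (h2 : ∀ x, 0 ≤ lam2 x)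
    (hp1 : IsPiecewiseConstOn T lam1) (hp2 : IsPiecewiseConstOn T lam2)
    (α : ℝ) (hα : α ∈ Set.Ioo (0:ℝ) 1) :
    fk k (fun x => α * lam1 x + (1 - α) * lam2 x) mu t ≥
        α * fk k lam1 mu t + (1 - α) * fk k lam2 mu t ∧
      (∫ r in (0:ℝ)..T, fk k (fun x => α * lam1 x + (1 - α) * lam2 x) mu r * s r) ≥
        α * (∫ r in (0:ℝ)..T, fk k lam1 mu r * s r) +
          (1 - α) * (∫ r in (0:ℝ)..T, fk k lam2 mu r * s r) := by
  have hmem1 := hp1.mem_admissibleRates h1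
  have hmem2 := hp2.mem_admissibleRates h2
  have hα0 : 0 ≤ α := hα.1.le
  have hα1 : 0 ≤ 1 - α := sub_nonneg.2 hα.2.le
  exact ⟨(concaveOn_fk hmu0 hmuInt k ht).2 hmem1 hmem2 hα0 hα1 (add_sub_cancel _ _),
    (concaveOn_integral_fk_mul hmu0 hmuInt k hs0 hsInt hT.le).2 hmem1 hmem2 hα0 hα1
      (add_sub_cancel _ _)⟩

/-- `λ ↦ f_k(t; λ, μ)` and `λ ↦ ∫_0^T f_k(r; λ, μ) s(r) dr` are concave on
the set of nonnegative piecewise constant functions on `[0, T]`. -/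
theorem stmt11 (mu : ℝ → ℝ) (hmu0 : ∀ x, 0 ≤ mu x) (hmuInt : LocallyIntegrable mu)
    (k : ℕ) (hk : 1 ≤ k) (t : ℝ) (ht : 0 ≤ t) (T : ℝ) (hT : 0 < T)
    (s : ℝ → ℝ) (hs0 : ∀ x, 0 ≤ s x) (hsInt : Integrable s)
    (lam1 lam2 : ℝ → ℝ) (h1 : ∀ x, 0 ≤ lam1 x) (h2 : ∀ x, 0 ≤ lam2 x)
    (hp1 : IsPiecewiseConstOn T lam1) (hp2 : IsPiecewiseConstOn T lam2)
    (α : ℝ) (hα : α ∈ Set.Ioo (0:ℝ) 1) :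
    fk k (fun x => α * lam1 x + (1 - α) * lam2 x) mu t ≥
        α * fk k lam1 mu t + (1 - α) * fk k lam2 mu t ∧
      (∫ r in (0:ℝ)..T, fk k (fun x => α * lam1 x + (1 - α) * lam2 x) mu r * s r) ≥
        α * (∫ r in (0:ℝ)..T, fk k lam1 mu r * s r) +
          (1 - α) * (∫ r in (0:ℝ)..T, fk k lam2 mu r * s r) :=
  stmt11_general mu hmu0 hmuInt k t ht T hT s hs0 hsInt lam1 lam2 h1 h2 hp1 hp2 α hα
end

section
/- Let b ≥ 0 and c ≥ 0 be constants with b + c > 0, let k ≥ 1 be an integer, and let h_1, …, h_k be real numbers. Define β_j = 1 - (b/(b+c))^j for j ≥ 1 and α_{i,j} = (b^i / i!) · (h_{j-i} - β_{j-i}) for 0 ≤ i ≤ j-1. Let f_1, …, f_k : [0, ∞) → ℝ satisfy the system of differential equations f_1'(t) + (b+c)·f_1(t) = c and f_j'(t) + (b+c)·f_j(t) = c + b·f_{j-1}(t) for 2 ≤ j ≤ k, with initial conditions f_j(0) = h_j. Then f_k(t) = e^{-(b+c)·t} · (α_{k-1,k}·t^{k-1} + α_{k-2,k}·t^{k-2}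 + … + α_{0,k}) + β_k for all t ≥ 0. -/
/-! Put `g_j(t) = (f_j(t) - β_j) e^{(b+c)t}`. Since `(b+c) β_{j+1} = c + b β_j` and `β_0 = 0`,
the system becomes the cascade `g_1' = 0`, `g_j' = b g_{j-1}` with `g_j(0) = h_j - β_j`, whose
solution is the polynomial `g_j(t) = ∑_{i<j} (h_{j-i} - β_{j-i}) (b t)^i / i!`; uniqueness comes
from the mean value theorem on `[0, t]`. -/

open Real Finset
open scoped Nat

lemma eq_of_hasDerivAt_eq_of_le {F G F' : ℝ → ℝ} {a : ℝ}
    (hF : ∀ t, a ≤ t → HasDerivAt F (F' t) t) (hG : ∀ t, a ≤ t → HasDerivAt G (F' t) t)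
    (ha : F a = G a) : ∀ t, a ≤ t → F t = G t := fun t ht =>
  eq_of_has_deriv_right_eq (fun x hx => (hF x hx.1).hasDerivWithinAt)
    (fun x hx => (hG x hx.1).hasDerivWithinAt)
    (fun x hx => (hF x hx.1).continuousAt.continuousWithinAt)
    (fun x hx => (hG x hx.1).continuousAt.continuousWithinAt) ha t ⟨ht, le_rfl⟩

lemma hasDerivAt_sub_mul_exp {f : ℝ → ℝ} {r β d t : ℝ}
    (hf : HasDerivAt f (d - r * (f t - β)) t) :
    HasDerivAt (fun s => (f s - β) * exp (r * s)) (d * exp (r * t)) t := by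
  have hexp : HasDerivAt (fun s => exp (r * s)) (exp (r * t) * r) t := by
    simpa using ((hasDerivAt_id t).const_mul r).exp
  exact ((hf.sub_const β).mul hexp).congr_deriv (by ring)

lemma add_mul_one_sub_div_pow_succ {b c : ℝ} (hbc : b + c ≠ 0) (j : ℕ) :
    (b + c) * (1 - (b / (b + c)) ^ (j + 1)) = c + b * (1 - (b / (b + c)) ^ j) := by
  rw [pow_succ']
  field_simp
  ring

noncomputable def cascadePoly (b : ℝ) (γ : ℕ → ℝ) (j : ℕ) (t : ℝ) : ℝ :=
  ∑ i ∈ range j, b ^ i / (i ! : ℝ) * γ (j - i) * t ^ i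

lemma cascadePoly_zero (b : ℝ) (γ : ℕ → ℝ) (t : ℝ) : cascadePoly b γ 0 t = 0 := by
  simp [cascadePoly]

lemma cascadePoly_succ_apply_zero (b : ℝ) (γ : ℕ → ℝ) (j : ℕ) :
    cascadePoly b γ (j + 1) 0 = γ (j + 1) := by
  simp [cascadePoly, sum_range_succ']

lemma hasDerivAt_cascadePoly_succ (b : ℝ) (γ : ℕ → ℝ) (j : ℕ) (t : ℝ) :
    HasDerivAt (cascadePoly b γ (j + 1)) (b * cascadePoly b γ j t) t := by
  have hsum : HasDerivAt (cascadePoly b γ (j + 1))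
      (∑ i ∈ range (j + 1), b ^ i / (i ! : ℝ) * γ (j + 1 - i) * (i * t ^ (i - 1))) t :=
    HasDerivAt.fun_sum fun i _ => (hasDerivAt_pow i t).const_mul _
  refine hsum.congr_deriv ?_
  rw [sum_range_succ', cascadePoly, mul_sum]
  simp only [CharP.cast_eq_zero, zero_mul, mul_zero, add_zero]
  refine sum_congr rfl fun i _ => ?_
  rw [Nat.factorial_succ, pow_succ, show j + 1 - (i + 1) = j - i by omega, add_tsub_cancel_right]
  have hi : (i ! : ℝ) ≠ 0 := by positivity
  push_cast
  field_simp

lemma eq_cascadePoly_of_hasDerivAt {b : ℝ} {γ : ℕ → ℝ} {k : ℕ} {g : ℕ → ℝ → ℝ}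
    (hinit : ∀ j, 1 ≤ j → j ≤ k → g j 0 = γ j)
    (hderiv₁ : ∀ t, 0 ≤ t → HasDerivAt (g 1) 0 t)
    (hderiv : ∀ j, 2 ≤ j → j ≤ k → ∀ t, 0 ≤ t →
      HasDerivAt (g j) (b * g (j - 1) t) t) :
    ∀ j, 1 ≤ j → j ≤ k → ∀ t, 0 ≤ t → g j t = cascadePoly b γ j t := by
  intro j
  induction j with
  | zero => intro hj; omega
  | succ j ih =>
    intro _ hjk
    refine eq_of_hasDerivAt_eq_of_le (fun t ht => ?_)
      (fun t _ => hasDerivAt_cascadePoly_succ b γ j t)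
      (by rw [hinit (j + 1) (by omega) hjk, cascadePoly_succ_apply_zero])
    rcases Nat.eq_zero_or_pos j with rfl | hj
    · simpa [cascadePoly_zero] using hderiv₁ t ht
    · rw [← ih hj (by omega) t ht]
      exact hderiv (j + 1) (by omega) hjk t ht

theorem stmt13_general (b c : ℝ) (hbc : 0 < b + c)
    (k : ℕ) (hk : 1 ≤ k) (h : ℕ → ℝ) (f : ℕ → ℝ → ℝ)
    (β : ℕ → ℝ) (hβ : ∀ j, β j = 1 - (b / (b + c)) ^ j)
    (α : ℕ → ℕ → ℝ)
    (hα : ∀ i j, α i j = b ^ i / (Nat.factorial i : ℝ) * (h (j - i) - β (j - i)))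
    (hinit : ∀ j, 1 ≤ j → j ≤ k → f j 0 = h j)
    (hode1 : ∀ t : ℝ, 0 ≤ t → HasDerivAt (f 1) (c - (b + c) * f 1 t) t)
    (hodej : ∀ j, 2 ≤ j → j ≤ k → ∀ t : ℝ, 0 ≤ t →
      HasDerivAt (f j) (c + b * f (j - 1) t - (b + c) * f j t) t) :
    ∀ t : ℝ, 0 ≤ t →
      f k t = Real.exp (-(b + c) * t) * (∑ i ∈ Finset.range k, α i k * t ^ i) + β k := by
  have hβ_succ (j : ℕ) : (b + c) * β (j + 1) = c + b * β j := by
    rw [hβ, hβ]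
    exact add_mul_one_sub_div_pow_succ hbc.ne' j
  have hβ₁ : (b + c) * β 1 = c := by simpa [hβ 0] using hβ_succ 0
  set g : ℕ → ℝ → ℝ := fun j s => (f j s - β j) * exp ((b + c) * s)
  have hg₁ (t : ℝ) (ht : 0 ≤ t) : HasDerivAt (g 1) 0 t := by
    simpa using hasDerivAt_sub_mul_exp (d := 0)
      ((hode1 t ht).congr_deriv (by linear_combination -hβ₁))
  have hg (j : ℕ) (hj : 2 ≤ j) (hjk : j ≤ k) (t : ℝ) (ht : 0 ≤ t) :
      HasDerivAt (g j) (b * g (j - 1) t) t := by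
    obtain ⟨j, rfl⟩ : ∃ i, j = i + 1 := ⟨j - 1, by omega⟩
    have hode := hodej (j + 1) hj hjk t ht
    rw [add_tsub_cancel_right] at hode ⊢
    exact (hasDerivAt_sub_mul_exp (d := b * (f j t - β j))
      (hode.congr_deriv (by linear_combination -hβ_succ j))).congr_deriv (mul_assoc _ _ _)
  have hg_eq := eq_cascadePoly_of_hasDerivAt (γ := fun j => h j - β j)
    (fun j hj hjk => by simp [g, hinit j hj hjk]) hg₁ hg
  intro t ht
  have hgk : (f k t - β k) * exp ((b + c) * t) = ∑ i ∈ Finset.range k, α i k * t ^ i := by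
    simp only [hg_eq k hk le_rfl t ht, cascadePoly, hα, g]
  rw [← hgk, neg_mul, exp_neg]
  field_simp
  ring

/-- explicit solution of the system of linear ODEs
`f_1' + (b+c) f_1 = c`, `f_j' + (b+c) f_j = c + b f_{j-1}` (`2 ≤ j ≤ k`) with
initial conditions `f_j(0) = h_j`:
`f_k(t) = e^{-(b+c)t} (α_{k-1,k} t^{k-1} + … + α_{0,k}) + β_k`, where
`β_j = 1 - (b/(b+c))^j` and `α_{i,j} = (b^i / i!)(h_{j-i} - β_{j-i})`. -/
theorem stmt13 (b c : ℝ) (hb : 0 ≤ b) (hc : 0 ≤ c) (hbc : 0 < b + c)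
    (k : ℕ) (hk : 1 ≤ k) (h : ℕ → ℝ) (f : ℕ → ℝ → ℝ)
    (β : ℕ → ℝ) (hβ : ∀ j, β j = 1 - (b / (b + c)) ^ j)
    (α : ℕ → ℕ → ℝ)
    (hα : ∀ i j, α i j = b ^ i / (Nat.factorial i : ℝ) * (h (j - i) - β (j - i)))
    (hinit : ∀ j, 1 ≤ j → j ≤ k → f j 0 = h j)
    (hode1 : ∀ t : ℝ, 0 ≤ t → HasDerivAt (f 1) (c - (b + c) * f 1 t) t)
    (hodej : ∀ j, 2 ≤ j → j ≤ k → ∀ t : ℝ, 0 ≤ t →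
      HasDerivAt (f j) (c + b * f (j - 1) t - (b + c) * f j t) t) :
    ∀ t : ℝ, 0 ≤ t →
      f k t = Real.exp (-(b + c) * t) * (∑ i ∈ Finset.range k, α i k * t ^ i) + β k :=
  stmt13_general b c hbc k hk h f β hβ α hα hinit hode1 hodej
end

section
/- Let μ : ℝ → ℝ be a continuous nonnegative function, let k ≥ 1 be an integer, and fix t ≥ 0. Then the functional λ ↦ f_k(t; λ, μ) is continuous with respect to the supremum norm on the set of continuous nonnegative functions on [0, t]: for every continuous nonnegative λ and every ε > 0 there exists δ > 0 such that |f_k(t; λ, μ) - f_k(t; λ', μ)| < ε for every continuous nonnegative λ' with sup_{x ∈ [0,t]} |λ(x) - λ'(x)| < δ. -/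
/-!
If `|λ - λ'| ≤ δ` on `[0, t]`, then pointwise in `τ` the factor `λ(τ)` moves by at most `δ`, the
exponent `∫_τ^t λ` by at most `δ t`, and `exp (-·)` is `1`-Lipschitz on `[0, ∞)`; the Gamma factor
does not depend on `λ` and lies in `[0, Γ(k, 0)]`. Integrating over `[0, t]` gives
`|f_k(λ) - f_k(λ')| ≤ K δ` with `K` depending only on `k`, `t` and `sup_{[0,t]} λ`.
-/

open MeasureTheory Real Set Filter Topology intervalIntegral

lemma integrableOn_uGamma_integrand (k : ℕ) (a : ℝ) :
    IntegrableOn (fun s : ℝ => s ^ (k - 1) * exp (-s)) (Ioi a) := by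
  refine integrable_of_isBigO_exp_neg (b := 1 / 2) (by norm_num)
    ((continuous_pow _).mul (continuous_exp.comp continuous_neg)).continuousOn ?_
  have hpow : (fun x : ℝ => x ^ (k - 1)) =o[atTop] fun x => exp (1 / 2 * x) :=
    isLittleO_pow_exp_pos_mul_atTop _ (by norm_num)
  refine (hpow.isBigO.mul (Asymptotics.isBigO_refl (fun x : ℝ => exp (-x)) atTop)).trans
    (Asymptotics.isBigO_of_le _ fun x => ?_)
  rw [← exp_add]
  ring_nf
  exact le_rfl

lemma uGamma_sub_uGamma (k : ℕ) (a b : ℝ) :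
    uGamma k a - uGamma k b = ∫ s in a..b, s ^ (k - 1) * exp (-s) :=
  integral_Ioi_sub_Ioi' (integrableOn_uGamma_integrand k a) (integrableOn_uGamma_integrand k b)

lemma uGamma_nonneg (k : ℕ) {x : ℝ} (hx : 0 ≤ x) : 0 ≤ uGamma k x :=
  setIntegral_nonneg measurableSet_Ioi fun s hs => by
    have : 0 ≤ s := hx.trans (le_of_lt hs)
    positivity

lemma antitoneOn_uGamma (k : ℕ) : AntitoneOn (uGamma k) (Ici 0) := by
  intro a ha b _ hab
  rw [← sub_nonneg, uGamma_sub_uGamma]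
  refine integral_nonneg hab fun s hs => ?_
  have : 0 ≤ s := le_trans ha hs.1
  positivity

lemma abs_exp_neg_sub_exp_neg_le {a b : ℝ} (ha : 0 ≤ a) (hb : 0 ≤ b) :
    |exp (-a) - exp (-b)| ≤ |a - b| := by
  wlog hab : a ≤ b generalizing a b
  · rw [abs_sub_comm, abs_sub_comm a]
    exact this hb ha (le_of_not_ge hab)
  rw [abs_of_nonpos (by linarith : a - b ≤ 0), abs_of_nonneg (sub_nonneg.mpr
    (exp_le_exp.mpr (by linarith)))]
  calc exp (-a) - exp (-b) = exp (-a) * (1 - exp (-(b - a))) := by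
        rw [mul_sub, ← exp_add]; ring_nf
    _ ≤ 1 * (b - a) :=
        mul_le_mul (exp_le_one_iff.mpr (by linarith)) (by linarith [one_sub_le_exp_neg (b - a)])
          (sub_nonneg.mpr (exp_le_one_iff.mpr (by linarith))) zero_le_one
    _ = -(a - b) := by ring

lemma abs_mul_exp_neg_sub_mul_exp_neg_le {a a' A A' : ℝ} (ha : 0 ≤ a) (hA : 0 ≤ A)
    (hA' : 0 ≤ A') :
    |a * exp (-A) - a' * exp (-A')| ≤ |a - a'| + a * |A - A'| :=
  calc |a * exp (-A) - a' * exp (-A')|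
      = |(a - a') * exp (-A') + a * (exp (-A) - exp (-A'))| := by ring_nf
    _ ≤ |a - a'| * exp (-A') + a * |exp (-A) - exp (-A')| := by
        refine (abs_add_le _ _).trans_eq ?_
        rw [abs_mul, abs_mul, abs_of_pos (exp_pos _), abs_of_nonneg ha]
    _ ≤ |a - a'| * 1 + a * |A - A'| :=
        add_le_add (mul_le_mul_of_nonneg_left (exp_le_one_iff.mpr (by linarith)) (abs_nonneg _))
          (mul_le_mul_of_nonneg_left (abs_exp_neg_sub_exp_neg_le hA hA') ha)
    _ = |a - a'| + a * |A - A'| := by ring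

lemma abs_integral_sub_integral_le {f g : ℝ → ℝ} {a b δ : ℝ} (hab : a ≤ b)
    (hf : IntervalIntegrable f volume a b) (hg : IntervalIntegrable g volume a b)
    (hfg : ∀ x ∈ Icc a b, |f x - g x| ≤ δ) :
    |(∫ x in a..b, f x) - ∫ x in a..b, g x| ≤ δ * (b - a) := by
  rw [← integral_sub hf hg, ← abs_of_nonneg (sub_nonneg.mpr hab)]
  exact norm_integral_le_of_norm_le_const (f := fun x => f x - g x) fun x hx =>
    hfg x (Ioc_subset_Icc_self (uIoc_of_le hab ▸ hx))

lemma continuous_integral_left (t : ℝ) {f : ℝ → ℝ} (hf : Continuous f) :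
    Continuous fun τ => ∫ x in τ..t, f x := by
  simp_rw [integral_symm t]
  exact (continuous_primitive (fun a b => hf.intervalIntegrable a b) t).neg

noncomputable def fkIntegrand (k : ℕ) (lam mu : ℝ → ℝ) (t τ : ℝ) : ℝ :=
  lam τ * exp (-∫ x in τ..t, lam x) * uGamma k (∫ x in τ..t, mu x)

lemma fk_eq_mul_integral_fkIntegrand (k : ℕ) (lam mu : ℝ → ℝ) (t : ℝ) :
    fk k lam mu t = 1 / ((k - 1).factorial : ℝ) * ∫ τ in (0 : ℝ)..t, fkIntegrand k lam mu t τ :=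
  rfl

lemma continuous_fkIntegrand (k : ℕ) {lam mu : ℝ → ℝ} (t : ℝ) (hlam : Continuous lam)
    (hmu : Continuous mu) : Continuous (fkIntegrand k lam mu t) :=
  (hlam.mul (continuous_exp.comp (continuous_integral_left t hlam).neg)).mul
    ((continuous_uGamma k).comp (continuous_integral_left t hmu))

section LipschitzBound

variable {k : ℕ} {lam lam' mu : ℝ → ℝ} {t L δ : ℝ}

lemma abs_fkIntegrand_sub_le (hlam : Continuous lam) (hlam' : Continuous lam')
    (hlam0 : ∀ x, 0 ≤ lam x) (hlam'0 : ∀ x, 0 ≤ lam' x) (hmu0 : ∀ x, 0 ≤ mu x)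
    (hL : ∀ x ∈ Icc 0 t, lam x ≤ L) (hδ : ∀ x ∈ Icc 0 t, |lam x - lam' x| ≤ δ)
    {τ : ℝ} (hτ : τ ∈ Icc 0 t) :
    |fkIntegrand k lam mu t τ - fkIntegrand k lam' mu t τ| ≤ δ * (1 + L * t) * uGamma k 0 := by
  obtain ⟨hτ0, hτt⟩ := hτ
  have hδ0 : 0 ≤ δ := (abs_nonneg _).trans (hδ τ ⟨hτ0, hτt⟩)
  have hL0 : 0 ≤ L := (hlam0 τ).trans (hL τ ⟨hτ0, hτt⟩)
  have hLt : 0 ≤ L * t := mul_nonneg hL0 (hτ0.trans hτt)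
  have hM : 0 ≤ ∫ x in τ..t, mu x := integral_nonneg hτt fun x _ => hmu0 x
  have hexponent : |(∫ x in τ..t, lam x) - ∫ x in τ..t, lam' x| ≤ δ * t :=
    (abs_integral_sub_integral_le hτt (hlam.intervalIntegrable _ _)
      (hlam'.intervalIntegrable _ _) fun x hx => hδ x ⟨hτ0.trans hx.1, hx.2⟩).trans
      (mul_le_mul_of_nonneg_left (by linarith) hδ0)
  have hfactor : |lam τ * exp (-∫ x in τ..t, lam x) - lam' τ * exp (-∫ x in τ..t, lam' x)|
      ≤ δ * (1 + L * t) :=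
    calc _ ≤ |lam τ - lam' τ| + lam τ * |(∫ x in τ..t, lam x) - ∫ x in τ..t, lam' x| :=
          abs_mul_exp_neg_sub_mul_exp_neg_le (hlam0 τ) (integral_nonneg hτt fun x _ => hlam0 x)
            (integral_nonneg hτt fun x _ => hlam'0 x)
      _ ≤ δ + L * (δ * t) :=
          add_le_add (hδ τ ⟨hτ0, hτt⟩)
            (mul_le_mul (hL τ ⟨hτ0, hτt⟩) hexponent (abs_nonneg _) hL0)
      _ = δ * (1 + L * t) := by ring
  rw [fkIntegrand, fkIntegrand, ← sub_mul, abs_mul, abs_of_nonneg (uGamma_nonneg k hM)]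
  exact mul_le_mul hfactor (antitoneOn_uGamma k self_mem_Ici hM hM) (uGamma_nonneg k hM)
    (mul_nonneg hδ0 (by linarith))

lemma abs_fk_sub_fk_le (hlam : Continuous lam) (hlam' : Continuous lam') (hmu : Continuous mu)
    (hlam0 : ∀ x, 0 ≤ lam x) (hlam'0 : ∀ x, 0 ≤ lam' x) (hmu0 : ∀ x, 0 ≤ mu x) (ht : 0 ≤ t)
    (hL : ∀ x ∈ Icc 0 t, lam x ≤ L) (hδ : ∀ x ∈ Icc 0 t, |lam x - lam' x| ≤ δ) :
    |fk k lam mu t - fk k lam' mu t|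
      ≤ 1 / ((k - 1).factorial : ℝ) * uGamma k 0 * t * (1 + L * t) * δ := by
  have hC : 0 ≤ 1 / ((k - 1).factorial : ℝ) := by positivity
  have hint := norm_integral_le_of_norm_le_const (a := 0) (b := t)
    (f := fun τ => fkIntegrand k lam mu t τ - fkIntegrand k lam' mu t τ) fun τ hτ =>
    abs_fkIntegrand_sub_le (k := k) (mu := mu) hlam hlam' hlam0 hlam'0 hmu0 hL hδ
      (Ioc_subset_Icc_self (uIoc_of_le ht ▸ hτ))
  rw [fk_eq_mul_integral_fkIntegrand, fk_eq_mul_integral_fkIntegrand, ← mul_sub,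
    ← integral_sub ((continuous_fkIntegrand k t hlam hmu).intervalIntegrable _ _)
      ((continuous_fkIntegrand k t hlam' hmu).intervalIntegrable _ _), abs_mul, abs_of_nonneg hC]
  calc _ ≤ 1 / ((k - 1).factorial : ℝ) * (δ * (1 + L * t) * uGamma k 0 * |t - 0|) :=
        mul_le_mul_of_nonneg_left hint hC
    _ = _ := by rw [sub_zero, abs_of_nonneg ht]; ring

end LipschitzBound

theorem stmt16_general (mu : ℝ → ℝ) (hmuc : Continuous mu) (hmu0 : ∀ x, 0 ≤ mu x)
    (k : ℕ) (t : ℝ) (ht : 0 ≤ t)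
    (lam : ℝ → ℝ) (hlamc : Continuous lam) (hlam0 : ∀ x, 0 ≤ lam x)
    (ε : ℝ) (hε : 0 < ε) :
    ∃ δ > 0, ∀ lam' : ℝ → ℝ, Continuous lam' → (∀ x, 0 ≤ lam' x) →
      sSup ((fun x => |lam x - lam' x|) '' Set.Icc 0 t) < δ →
      |fk k lam mu t - fk k lam' mu t| < ε := by
  set L := sSup (lam '' Icc 0 t)
  have hL : ∀ x ∈ Icc 0 t, lam x ≤ L := fun x hx => hlamc.continuousOn.le_sSup_image_Icc hx
  set K := 1 / ((k - 1).factorial : ℝ) * uGamma k 0 * t * (1 + L * t)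
  have hK : 0 ≤ K := by
    have hL0 : 0 ≤ L := (hlam0 0).trans (hL 0 ⟨le_rfl, ht⟩)
    have := uGamma_nonneg k (le_refl 0)
    positivity
  refine ⟨ε / (K + 1), div_pos hε (by linarith), fun lam' hlam'c hlam'0 hsup => ?_⟩
  have hd : ∀ x ∈ Icc 0 t, |lam x - lam' x| ≤ sSup ((fun x => |lam x - lam' x|) '' Icc 0 t) :=
    fun x hx => (hlamc.sub hlam'c).abs.continuousOn.le_sSup_image_Icc hx
  calc |fk k lam mu t - fk k lam' mu t|
      ≤ K * sSup ((fun x => |lam x - lam' x|) '' Icc 0 t) :=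
        abs_fk_sub_fk_le hlamc hlam'c hmuc hlam0 hlam'0 hmu0 ht hL hd
    _ ≤ K * (ε / (K + 1)) := mul_le_mul_of_nonneg_left hsup.le hK
    _ < ε := by
        rw [mul_div_assoc', div_lt_iff₀ (by linarith)]
        nlinarith

/-- the functional `λ ↦ f_k(t; λ, μ)` is continuous with respect to the
supremum norm on the set of continuous nonnegative functions on `[0, t]`. -/
theorem stmt16 (mu : ℝ → ℝ) (hmuc : Continuous mu) (hmu0 : ∀ x, 0 ≤ mu x)
    (k : ℕ) (hk : 1 ≤ k) (t : ℝ) (ht : 0 ≤ t)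
    (lam : ℝ → ℝ) (hlamc : Continuous lam) (hlam0 : ∀ x, 0 ≤ lam x)
    (ε : ℝ) (hε : 0 < ε) :
    ∃ δ > 0, ∀ lam' : ℝ → ℝ, Continuous lam' → (∀ x, 0 ≤ lam' x) →
      sSup ((fun x => |lam x - lam' x|) '' Set.Icc 0 t) < δ →
      |fk k lam mu t - fk k lam' mu t| < ε :=
  stmt16_general mu hmuc hmu0 k t ht lam hlamc hlam0 ε hε
end
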